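/- (Translation formulas for the Berezin–Weil–Zak transform.) Let λ ∈ ℤ∖{0}, q₀, q ∈ ℤ, let h : ℝ → ℂ be a Schwartz function and let x = (a,b,c) ∈ ℝ³. Then, with · the Heisenberg product: (i) BWZ_{λ,q₀}(h)(x·(q/λ, 0, 0)) = e^{−2πiqb} · e^{2πiq₀q/λ} · BWZ_{λ,q₀}(h)(x); (ii) BWZ_{λ,q₀}(h)(x·(0, q/λ, 0)) = e^{2πiqa} · BWZ_{λ,q₀−q}(h)(x). -/
import Mathlib


open MeasureTheory Real Complex
open scoped ComplexConjugate

/-- The Heisenberg product on `ℝ³`: `(a,b,c)·(a',b',c') = (a+a', b+b', c+c'+ab')`. -/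
def heisMul (x y : ℝ × ℝ × ℝ) : ℝ × ℝ × ℝ :=
  (x.1 + y.1, x.2.1 + y.2.1, x.2.2 + y.2.2 + x.1 * y.2.1)

/-- The generalised Berezin–Weil–Zak transform
`BWZ_{λ,q}(h)(a,b,c) = (√|λ|/λ) ∑_{k∈ℤ} e^{-2πiqk/λ} e^{2πi(λc+kb)} h(k/λ + a)`. -/
noncomputable def BWZ (lam q : ℤ) (h : ℝ → ℂ) (x : ℝ × ℝ × ℝ) : ℂ :=
  ((Real.sqrt |(lam : ℝ)| : ℝ) / (lam : ℝ) : ℝ) *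
    ∑' k : ℤ, Complex.exp (-(2 * (π : ℂ) * Complex.I * (q : ℂ) * (k : ℂ)) / (lam : ℂ)) *
      Complex.exp (2 * (π : ℂ) * Complex.I * ((lam : ℂ) * (x.2.2 : ℂ) + (k : ℂ) * (x.2.1 : ℂ))) *
      h ((k : ℝ) / (lam : ℝ) + x.1)

/-- **Translation formulas for the Berezin–Weil–Zak transform**:
(i) `BWZ_{λ,q₀}(h)(x·(q/λ,0,0)) = e^{-2πiqb} e^{2πiq₀q/λ} BWZ_{λ,q₀}(h)(x)`;
(ii) `BWZ_{λ,q₀}(h)(x·(0,q/λ,0)) = e^{2πiqa} BWZ_{λ,q₀-q}(h)(x)`. -/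
theorem BWZ_translation (lam : ℤ) (hlam : lam ≠ 0) (q₀ q : ℤ) (h : SchwartzMap ℝ ℂ)
    (a b c : ℝ) :
    BWZ lam q₀ (⇑h) (heisMul (a, b, c) ((q : ℝ) / (lam : ℝ), 0, 0))
        = Complex.exp (-(2 * (π : ℂ) * Complex.I * (q : ℂ) * (b : ℂ))) *
          Complex.exp (2 * (π : ℂ) * Complex.I * (q₀ : ℂ) * (q : ℂ) / (lam : ℂ)) *
          BWZ lam q₀ (⇑h) (a, b, c) ∧
      BWZ lam q₀ (⇑h) (heisMul (a, b, c) (0, (q : ℝ) / (lam : ℝ), 0))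
        = Complex.exp (2 * (π : ℂ) * Complex.I * (q : ℂ) * (a : ℂ)) *
          BWZ lam (q₀ - q) (⇑h) (a, b, c) := by
  have hlr : (lam : ℝ) ≠ 0 := Int.cast_ne_zero.mpr hlam
  have hlc : (lam : ℂ) ≠ 0 := Int.cast_ne_zero.mpr hlam
  set g : ℤ → ℂ := fun k =>
    Complex.exp (-(2 * (π : ℂ) * Complex.I * (q₀ : ℂ) * (k : ℂ)) / (lam : ℂ)) *
      Complex.exp (2 * (π : ℂ) * Complex.I * ((lam : ℂ) * (c : ℂ) + (k : ℂ) * (b : ℂ))) *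
      h ((k : ℝ) / (lam : ℝ) + a) with hg
  constructor
  · simp only [BWZ, heisMul, add_zero, mul_zero]
    have key : (∑' k : ℤ,
        Complex.exp (-(2 * (π : ℂ) * Complex.I * (q₀ : ℂ) * (k : ℂ)) / (lam : ℂ)) *
          Complex.exp (2 * (π : ℂ) * Complex.I * ((lam : ℂ) * (c : ℂ) + (k : ℂ) * (b : ℂ))) *
          h ((k : ℝ) / (lam : ℝ) + (a + (q : ℝ) / (lam : ℝ))))
        = (Complex.exp (-(2 * (π : ℂ) * Complex.I * (q : ℂ) * (b : ℂ))) *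
            Complex.exp (2 * (π : ℂ) * Complex.I * (q₀ : ℂ) * (q : ℂ) / (lam : ℂ))) *
          ∑' k : ℤ, g k := by
      calc (∑' k : ℤ,
          Complex.exp (-(2 * (π : ℂ) * Complex.I * (q₀ : ℂ) * (k : ℂ)) / (lam : ℂ)) *
            Complex.exp (2 * (π : ℂ) * Complex.I * ((lam : ℂ) * (c : ℂ) + (k : ℂ) * (b : ℂ))) *
            h ((k : ℝ) / (lam : ℝ) + (a + (q : ℝ) / (lam : ℝ))))
          = ∑' k : ℤ, (Complex.exp (-(2 * (π : ℂ) * Complex.I * (q : ℂ) * (b : ℂ))) *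
              Complex.exp (2 * (π : ℂ) * Complex.I * (q₀ : ℂ) * (q : ℂ) / (lam : ℂ))) *
              g (k + q) := by
            refine tsum_congr fun k => ?_
            have harg : (k : ℝ) / (lam : ℝ) + (a + (q : ℝ) / (lam : ℝ))
                = ((k + q : ℤ) : ℝ) / (lam : ℝ) + a := by
              push_cast; field_simp; ring
            rw [harg, hg]
            simp only
            rw [← Complex.exp_add, ← Complex.exp_add, ← Complex.exp_add,
              ← mul_assoc, ← Complex.exp_add]
            congr 1
            congr 1
            push_cast
            field_simp
            ring
        _ = _ * ∑' k : ℤ, g (k + q) := tsum_mul_left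
        _ = _ * ∑' k : ℤ, g k := by
            congr 1
            simpa using (Equiv.addRight q).tsum_eq g
    rw [key]; ring
  · simp only [BWZ, heisMul, add_zero]
    have key : (∑' k : ℤ,
        Complex.exp (-(2 * (π : ℂ) * Complex.I * (q₀ : ℂ) * (k : ℂ)) / (lam : ℂ)) *
          Complex.exp (2 * (π : ℂ) * Complex.I *
            ((lam : ℂ) * ((c + a * ((q : ℝ) / (lam : ℝ)) : ℝ) : ℂ) +
              (k : ℂ) * ((b + (q : ℝ) / (lam : ℝ) : ℝ) : ℂ))) *
          h ((k : ℝ) / (lam : ℝ) + a))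
        = Complex.exp (2 * (π : ℂ) * Complex.I * (q : ℂ) * (a : ℂ)) *
          ∑' k : ℤ,
            Complex.exp (-(2 * (π : ℂ) * Complex.I * ((q₀ - q : ℤ) : ℂ) * (k : ℂ)) / (lam : ℂ)) *
              Complex.exp (2 * (π : ℂ) * Complex.I * ((lam : ℂ) * (c : ℂ) + (k : ℂ) * (b : ℂ))) *
              h ((k : ℝ) / (lam : ℝ) + a) := by
      rw [← tsum_mul_left]
      refine tsum_congr fun k => ?_
      rw [← Complex.exp_add, ← Complex.exp_add, ← mul_assoc, ← Complex.exp_add]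
      congr 1
      congr 1
      push_cast
      field_simp
      ring
    rw [key]; ring
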